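/- For every n ≥ 1, the number of Stirling permutations of order n that avoid both of the patterns 213 and 1233 equals the 2n-th Fibonacci number, i.e. #Q_n(213, 1233) = F_{2n}, with the convention F_0 = 0, F_1 = 1, F_{m} = F_{m−1} + F_{m−2}. -/

import Mathlib

open scoped Classical

/-- `σ` is a Stirling permutation of order `n`: each letter `1,…,n` occurs
exactly twice and every entry strictly between the two occurrences of a letter
is greater than that letter. -/
def IsStirling (n : ℕ) (σ : List ℕ) : Prop :=
  (∀ i : ℕ, σ.count i = if 1 ≤ i ∧ i ≤ n then 2 else 0) ∧
  (∀ j k l : ℕ, j < k → k < l → l < σ.length →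
    σ.getD j 0 = σ.getD l 0 → σ.getD j 0 < σ.getD k 0)

/-- `σ` contains the pattern word `τ`. -/
def Contains (σ τ : List ℕ) : Prop :=
  ∃ ι : Fin τ.length → Fin σ.length, StrictMono ι ∧
    ∀ s t : Fin τ.length, τ.get s < τ.get t ↔ σ.get (ι s) < σ.get (ι t)

/-- `σ` avoids the pattern word `τ`. -/
def Avoids (σ τ : List ℕ) : Prop := ¬ Contains σ τ

/-- Number of adjacent pairs of `σ` satisfying the relation `R`. -/
noncomputable def statCount (R : ℕ → ℕ → Prop) (σ : List ℕ) : ℕ :=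
  Set.ncard {i : ℕ | i + 1 < σ.length ∧ R (σ.getD i 0) (σ.getD (i + 1) 0)}

/-- Number of descents. -/
noncomputable def desStat (σ : List ℕ) : ℕ := statCount (· > ·) σ
/-- Number of ascents. -/
noncomputable def ascStat (σ : List ℕ) : ℕ := statCount (· < ·) σ
/-- Number of plateaus. -/
noncomputable def platStat (σ : List ℕ) : ℕ := statCount (· = ·) σ


lemma contains213_iff (σ : List ℕ) :
    Contains σ [2,1,3] ↔ ∃ i j k : ℕ, i < j ∧ j < k ∧ k < σ.length ∧
      σ.getD j 0 < σ.getD i 0 ∧ σ.getD i 0 < σ.getD k 0 := by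
  constructor
  · rintro ⟨ι, hmono, hiff⟩
    refine ⟨ι ⟨0, by norm_num⟩, ι ⟨1, by norm_num⟩, ι ⟨2, by norm_num⟩,
      hmono (by norm_num [Fin.lt_def]), hmono (by norm_num [Fin.lt_def]),
      (ι ⟨2, by norm_num⟩).isLt, ?_, ?_⟩
    · have := (hiff ⟨1, by norm_num⟩ ⟨0, by norm_num⟩).mp (by decide)
      simpa [List.getD_eq_getElem, List.get_eq_getElem] using this
    · have := (hiff ⟨0, by norm_num⟩ ⟨2, by norm_num⟩).mp (by decide)
      simpa [List.getD_eq_getElem, List.get_eq_getElem] using this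
  · rintro ⟨i, j, k, hij, hjk, hk, h1, h2⟩
    have Ei : σ.getD i 0 = σ[i]'(by omega) := List.getD_eq_getElem σ 0 (by omega)
    have Ej : σ.getD j 0 = σ[j]'(by omega) := List.getD_eq_getElem σ 0 (by omega)
    have Ek : σ.getD k 0 = σ[k]'(by omega) := List.getD_eq_getElem σ 0 (by omega)
    refine ⟨fun s => if s = ⟨0, by norm_num⟩ then ⟨i, by omega⟩ else
      if s = ⟨1, by norm_num⟩ then ⟨j, by omega⟩ else ⟨k, hk⟩, ?_, ?_⟩
    · intro a b hab
      fin_cases a <;> fin_cases b <;> simp_all [Fin.lt_def] <;> omega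
    · intro s t
      fin_cases s <;> fin_cases t <;> simp [List.get_eq_getElem] <;> omega

lemma contains1233_iff (σ : List ℕ) :
    Contains σ [1,2,3,3] ↔ ∃ i j k l : ℕ, i < j ∧ j < k ∧ k < l ∧ l < σ.length ∧
      σ.getD i 0 < σ.getD j 0 ∧ σ.getD j 0 < σ.getD k 0 ∧ σ.getD k 0 = σ.getD l 0 := by
  constructor
  · rintro ⟨ι, hmono, hiff⟩
    refine ⟨ι ⟨0, by norm_num⟩, ι ⟨1, by norm_num⟩, ι ⟨2, by norm_num⟩, ι ⟨3, by norm_num⟩,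
      hmono (by norm_num [Fin.lt_def]), hmono (by norm_num [Fin.lt_def]),
      hmono (by norm_num [Fin.lt_def]), (ι ⟨3, by norm_num⟩).isLt, ?_, ?_, ?_⟩
    · have := (hiff ⟨0, by norm_num⟩ ⟨1, by norm_num⟩).mp (by decide)
      simpa [List.getD_eq_getElem, List.get_eq_getElem] using this
    · have := (hiff ⟨1, by norm_num⟩ ⟨2, by norm_num⟩).mp (by decide)
      simpa [List.getD_eq_getElem, List.get_eq_getElem] using this
    · have h1 : ¬ σ.get (ι ⟨2, by norm_num⟩) < σ.get (ι ⟨3, by norm_num⟩) :=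
        fun h => absurd ((hiff ⟨2, by norm_num⟩ ⟨3, by norm_num⟩).mpr h) (by decide)
      have h2 : ¬ σ.get (ι ⟨3, by norm_num⟩) < σ.get (ι ⟨2, by norm_num⟩) :=
        fun h => absurd ((hiff ⟨3, by norm_num⟩ ⟨2, by norm_num⟩).mpr h) (by decide)
      have E2 := List.getD_eq_getElem σ 0 (ι ⟨2, by norm_num⟩).isLt
      have E3 := List.getD_eq_getElem σ 0 (ι ⟨3, by norm_num⟩).isLt
      simp only [List.get_eq_getElem] at h1 h2
      omega
  · rintro ⟨i, j, k, l, hij, hjk, hkl, hl, h1, h2, h3⟩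
    have Ei : σ.getD i 0 = σ[i]'(by omega) := List.getD_eq_getElem σ 0 (by omega)
    have Ej : σ.getD j 0 = σ[j]'(by omega) := List.getD_eq_getElem σ 0 (by omega)
    have Ek : σ.getD k 0 = σ[k]'(by omega) := List.getD_eq_getElem σ 0 (by omega)
    have El : σ.getD l 0 = σ[l]'(by omega) := List.getD_eq_getElem σ 0 (by omega)
    refine ⟨fun s => if s = ⟨0, by norm_num⟩ then ⟨i, by omega⟩ else
      if s = ⟨1, by norm_num⟩ then ⟨j, by omega⟩ else
      if s = ⟨2, by norm_num⟩ then ⟨k, by omega⟩ else ⟨l, hl⟩, ?_, ?_⟩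
    · intro a b hab
      fin_cases a <;> fin_cases b <;> simp_all [Fin.lt_def] <;> omega
    · intro s t
      fin_cases s <;> fin_cases t <;>
        simp [List.get_eq_getElem, show ((3:Fin 4):ℕ) = 3 from rfl,
          show ((2:Fin 4):ℕ) = 2 from rfl, show ((1:Fin 4):ℕ) = 1 from rfl,
          show ((0:Fin 4):ℕ) = 0 from rfl] <;> omega

lemma stirling_mem_le {n : ℕ} {σ : List ℕ} (h : IsStirling n σ) {x : ℕ} (hx : x ∈ σ) :
    1 ≤ x ∧ x ≤ n := by
  have := h.1 x
  have hc : 0 < σ.count x := List.count_pos_iff.mpr hx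
  by_contra hcon
  rw [if_neg (by tauto)] at this
  omega

lemma stirling_length {n : ℕ} {σ : List ℕ} (h : IsStirling n σ) : σ.length = 2 * n := by
  have h1 : σ.toFinset = Finset.Icc 1 n := by
    ext a
    simp only [List.mem_toFinset, Finset.mem_Icc]
    constructor
    · intro ha; exact stirling_mem_le h ha
    · intro ha
      have := h.1 a
      rw [if_pos ha] at this
      exact List.count_pos_iff.mp (by omega)
  have h2 : σ.length = ∑ a ∈ σ.toFinset, σ.count a := by
    have := Multiset.toFinset_sum_count_eq (σ : Multiset ℕ)
    simpa using this.symm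
  rw [h2, h1]
  rw [Finset.sum_congr rfl (fun a ha => by
    rw [h.1 a, if_pos (Finset.mem_Icc.mp ha)])]
  simp [Nat.card_Icc]
  ring

lemma getD_cat (x y : List ℕ) (i : ℕ) :
    (x ++ y).getD i 0 = if i < x.length then x.getD i 0 else y.getD (i - x.length) 0 := by
  split_ifs with h
  · exact List.getD_append x y 0 i h
  · exact List.getD_append_right x y 0 i (by omega)

lemma getD_ins (x y : List ℕ) (m : ℕ) (i : ℕ) :
    (x ++ [m,m] ++ y).getD i 0 =
      if i < x.length then x.getD i 0
      else if i < x.length + 2 then m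
      else y.getD (i - x.length - 2) 0 := by
  rw [List.append_assoc, getD_cat]
  split_ifs with h1 h2
  · rfl
  · rw [getD_cat]
    have : i - x.length < 2 := by omega
    rw [if_pos (by simpa using this)]
    interval_cases h : (i - x.length) <;> simp
  · rw [getD_cat]
    rw [if_neg (by simp; omega)]
    norm_num [Nat.sub_sub]

def Good (n : ℕ) (σ : List ℕ) : Prop :=
  IsStirling n σ ∧ Avoids σ [2, 1, 3] ∧ Avoids σ [1, 2, 3, 3]

lemma getD_mem_of_lt {l : List ℕ} {i : ℕ} (h : i < l.length) : l.getD i 0 ∈ l := by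
  rw [List.getD_eq_getElem l 0 h]; exact List.getElem_mem h

lemma insert_good {n : ℕ} (hn : 1 ≤ n) {x y : List ℕ}
    (hg : Good n (x ++ y)) (hlen : x.length ≤ 2)
    (hplat : x.length = 2 → x.getD 0 0 = x.getD 1 0) :
    Good (n+1) (x ++ [n+1, n+1] ++ y) := by
  obtain ⟨hstir, hav1, hav2⟩ := hg
  set p := x.length with hp
  have hLτ : (x ++ y).length = x.length + y.length := by simp
  have hLσ : (x ++ [n+1,n+1] ++ y).length = x.length + 2 + y.length := by simp; omega
  have hproj1 : ∀ i, i < p → (x ++ [n+1,n+1] ++ y).getD i 0 = (x ++ y).getD i 0 := by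
    intro i hi
    rw [getD_ins, getD_cat, if_pos hi, if_pos hi]
  have hproj2 : ∀ i, p + 2 ≤ i → (x ++ [n+1,n+1] ++ y).getD i 0 = (x ++ y).getD (i-2) 0 := by
    intro i hi
    rw [getD_ins, getD_cat, if_neg (by omega), if_neg (by omega), if_neg (by omega)]
    congr 1
    omega
  have hblock : ∀ i, p ≤ i → i < p + 2 → (x ++ [n+1,n+1] ++ y).getD i 0 = n + 1 := by
    intro i h1 h2
    rw [getD_ins, if_neg (by omega), if_pos (by omega)]
  have hτle : ∀ i, i < x.length + y.length → (x ++ y).getD i 0 ≤ n := by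
    intro i hi
    exact (stirling_mem_le hstir (getD_mem_of_lt (by omega))).2
  have hσle : ∀ i, (i < p ∨ p + 2 ≤ i) → i < x.length + 2 + y.length →
      (x ++ [n+1,n+1] ++ y).getD i 0 ≤ n := by
    intro i h1 h2
    rcases h1 with h1 | h1
    · rw [hproj1 i h1]; exact hτle i (by omega)
    · rw [hproj2 i h1]; exact hτle (i-2) (by omega)
  refine ⟨⟨?_, ?_⟩, ?_, ?_⟩
  · -- counts
    intro i
    have h0 := hstir.1 i
    rw [List.count_append] at h0
    have hcnt : (x ++ [n+1,n+1] ++ y).count i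
        = x.count i + ([n+1,n+1] : List ℕ).count i + y.count i := by
      rw [List.count_append, List.count_append]; try omega
    have hm : ([n+1,n+1] : List ℕ).count i = if i = n+1 then 2 else 0 := by
      by_cases h : i = n + 1 <;> simp [h, eq_comm]
    rw [hcnt, hm]
    split_ifs at h0 ⊢ <;> omega
  · -- betweenness
    intro j k l hjk hkl hl hval
    rw [hLσ] at hl
    -- j and l cannot both be in the block (adjacent); value at block = n+1 > all else
    by_cases hjb : p ≤ j ∧ j < p + 2
    · -- σ_j = n+1; then σ_l = n+1 too, so l in block, but l ≥ j+2 impossible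
      have hj' := hblock j hjb.1 hjb.2
      by_cases hlb : p ≤ l ∧ l < p + 2
      · omega
      · have hl' : (x ++ [n+1,n+1] ++ y).getD l 0 ≤ n :=
          hσle l (by omega) (by omega)
        omega
    · have hj' : (x ++ [n+1,n+1] ++ y).getD j 0 ≤ n := hσle j (by omega) (by omega)
      by_cases hlb : p ≤ l ∧ l < p + 2
      · have := hblock l hlb.1 hlb.2
        omega
      · -- j, l outside; if k in block, value n+1 > σ_j
        by_cases hkb : p ≤ k ∧ k < p + 2
        · rw [hblock k hkb.1 hkb.2]
          omega
        · -- all outside: project to x ++ y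
          have pj : (x ++ [n+1,n+1] ++ y).getD j 0
              = (x ++ y).getD (if j < p then j else j - 2) 0 := by
            split_ifs with h
            · exact hproj1 j h
            · exact hproj2 j (by omega)
          have pk : (x ++ [n+1,n+1] ++ y).getD k 0
              = (x ++ y).getD (if k < p then k else k - 2) 0 := by
            split_ifs with h
            · exact hproj1 k h
            · exact hproj2 k (by omega)
          have pl : (x ++ [n+1,n+1] ++ y).getD l 0
              = (x ++ y).getD (if l < p then l else l - 2) 0 := by
            split_ifs with h
            · exact hproj1 l h
            · exact hproj2 l (by omega)
          rw [pj, pl] at hval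
          rw [pj, pk]
          exact hstir.2 _ _ _ (by split_ifs <;> omega) (by split_ifs <;> omega)
            (by split_ifs <;> omega) hval
  · -- avoid 213
    intro hc
    rw [contains213_iff] at hc
    obtain ⟨i, j, k, hij, hjk, hk, h1, h2⟩ := hc
    rw [hLσ] at hk
    -- σ_i ≤ n (else σ_k > n+1 impossible); so i outside block, similarly j
    have hkle : (x ++ [n+1,n+1] ++ y).getD k 0 ≤ n + 1 := by
      by_cases hkb : p ≤ k ∧ k < p + 2
      · rw [hblock k hkb.1 hkb.2]
      · exact le_trans (hσle k (by omega) (by omega)) (by omega)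
    have hile : (x ++ [n+1,n+1] ++ y).getD i 0 ≤ n := by omega
    have hib : i < p ∨ p + 2 ≤ i := by
      by_contra hcon
      rw [hblock i (by omega) (by omega)] at hile
      omega
    have hjb : j < p ∨ p + 2 ≤ j := by
      by_contra hcon
      rw [hblock j (by omega) (by omega)] at h1
      have := hσle i hib (by omega)
      omega
    by_cases hkb : p ≤ k ∧ k < p + 2
    · -- i < j < k ≤ p+1, i,j outside → i,j < p → p = 2, i=0, j=1
      have hilt : i < p := by omega
      have hjlt : j < p := by omega
      have hp2 : p = 2 := by omega
      have hi0 : i = 0 := by omega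
      have hj1 : j = 1 := by omega
      have e0 := hproj1 0 (by omega)
      have e1 := hproj1 1 (by omega)
      have hx0 : (x ++ y).getD 0 0 = x.getD 0 0 := by rw [getD_cat, if_pos (by omega)]
      have hx1 : (x ++ y).getD 1 0 = x.getD 1 0 := by rw [getD_cat, if_pos (by omega)]
      have := hplat hp2
      subst hi0 hj1
      rw [e0, hx0] at h1 h2
      rw [e1, hx1] at h1
      omega
    · -- all outside: project
      have hkb' : k < p ∨ p + 2 ≤ k := by omega
      apply hav1
      rw [contains213_iff]
      refine ⟨(if i < p then i else i - 2), (if j < p then j else j - 2),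
        (if k < p then k else k - 2), ?_, ?_, ?_, ?_, ?_⟩
      · split_ifs <;> omega
      · split_ifs <;> omega
      · rw [hLτ]; split_ifs <;> omega
      · rw [← (by split_ifs with h; exacts [hproj1 i h, hproj2 i (by omega)] :
            (x ++ [n+1,n+1] ++ y).getD i 0 = (x ++ y).getD (if i < p then i else i - 2) 0),
          ← (by split_ifs with h; exacts [hproj1 j h, hproj2 j (by omega)] :
            (x ++ [n+1,n+1] ++ y).getD j 0 = (x ++ y).getD (if j < p then j else j - 2) 0)]
        exact h1
      · rw [← (by split_ifs with h; exacts [hproj1 i h, hproj2 i (by omega)] :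
            (x ++ [n+1,n+1] ++ y).getD i 0 = (x ++ y).getD (if i < p then i else i - 2) 0),
          ← (by split_ifs with h; exacts [hproj1 k h, hproj2 k (by omega)] :
            (x ++ [n+1,n+1] ++ y).getD k 0 = (x ++ y).getD (if k < p then k else k - 2) 0)]
        exact h2
  · -- avoid 1233
    intro hc
    rw [contains1233_iff] at hc
    obtain ⟨i, j, k, l, hij, hjk, hkl, hl, h1, h2, h3⟩ := hc
    rw [hLσ] at hl
    have hkle : (x ++ [n+1,n+1] ++ y).getD k 0 ≤ n + 1 := by
      by_cases hkb : p ≤ k ∧ k < p + 2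
      · rw [hblock k hkb.1 hkb.2]
      · exact le_trans (hσle k (by omega) (by omega)) (by omega)
    have hjle : (x ++ [n+1,n+1] ++ y).getD j 0 ≤ n := by omega
    have hjb : j < p ∨ p + 2 ≤ j := by
      by_contra hcon
      rw [hblock j (by omega) (by omega)] at hjle
      omega
    have hib : i < p ∨ p + 2 ≤ i := by
      by_contra hcon
      rw [hblock i (by omega) (by omega)] at h1
      omega
    by_cases hkb : p ≤ k ∧ k < p + 2
    · -- k in block: σ_k = n+1 = σ_l, so l in block too (values elsewhere ≤ n)
      have hkv := hblock k hkb.1 hkb.2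
      have hlb : p ≤ l ∧ l < p + 2 := by
        by_contra hcon
        have := hσle l (by omega) (by omega)
        omega
      -- so k = p, l = p+1, and i < j < p ≤ 2 → p = 2, i=0, j=1
      have hp2 : p = 2 := by omega
      have hi0 : i = 0 := by omega
      have hj1 : j = 1 := by omega
      have e0 := hproj1 0 (by omega)
      have e1 := hproj1 1 (by omega)
      have hx0 : (x ++ y).getD 0 0 = x.getD 0 0 := by rw [getD_cat, if_pos (by omega)]
      have hx1 : (x ++ y).getD 1 0 = x.getD 1 0 := by rw [getD_cat, if_pos (by omega)]
      have := hplat hp2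
      subst hi0 hj1
      rw [e0, hx0] at h1
      rw [e1, hx1] at h1
      omega
    · -- k outside block: σ_k ≤ n, so σ_l = σ_k ≤ n → l outside
      have hkv := hσle k (by omega) (by omega)
      have hlb : l < p ∨ p + 2 ≤ l := by
        by_contra hcon
        rw [hblock l (by omega) (by omega)] at h3
        omega
      apply hav2
      rw [contains1233_iff]
      have Pi : (x ++ [n+1,n+1] ++ y).getD i 0
          = (x ++ y).getD (if i < p then i else i - 2) 0 := by
        split_ifs with h; exacts [hproj1 i h, hproj2 i (by omega)]
      have Pj : (x ++ [n+1,n+1] ++ y).getD j 0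
          = (x ++ y).getD (if j < p then j else j - 2) 0 := by
        split_ifs with h; exacts [hproj1 j h, hproj2 j (by omega)]
      have Pk : (x ++ [n+1,n+1] ++ y).getD k 0
          = (x ++ y).getD (if k < p then k else k - 2) 0 := by
        split_ifs with h; exacts [hproj1 k h, hproj2 k (by omega)]
      have Pl : (x ++ [n+1,n+1] ++ y).getD l 0
          = (x ++ y).getD (if l < p then l else l - 2) 0 := by
        split_ifs with h; exacts [hproj1 l h, hproj2 l (by omega)]
      refine ⟨(if i < p then i else i - 2), (if j < p then j else j - 2),
        (if k < p then k else k - 2), (if l < p then l else l - 2),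
        ?_, ?_, ?_, ?_, ?_, ?_, ?_⟩
      · split_ifs <;> omega
      · split_ifs <;> omega
      · split_ifs <;> omega
      · rw [hLτ]; split_ifs <;> omega
      · rw [← Pi, ← Pj]; exact h1
      · rw [← Pj, ← Pk]; exact h2
      · rw [← Pk, ← Pl]; exact h3

lemma delete_good {n : ℕ} (hn : 1 ≤ n) {x y : List ℕ}
    (hg : Good (n+1) (x ++ [n+1, n+1] ++ y)) : Good n (x ++ y) := by
  obtain ⟨hstir, hav1, hav2⟩ := hg
  set p := x.length with hp
  have hLτ : (x ++ y).length = x.length + y.length := by simp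
  have hLσ : (x ++ [n+1,n+1] ++ y).length = x.length + 2 + y.length := by
    simp; try omega
  have hproj1 : ∀ i, i < p → (x ++ [n+1,n+1] ++ y).getD i 0 = (x ++ y).getD i 0 := by
    intro i hi
    rw [getD_ins, getD_cat, if_pos hi, if_pos hi]
  have hproj2 : ∀ i, p ≤ i → (x ++ [n+1,n+1] ++ y).getD (i+2) 0 = (x ++ y).getD i 0 := by
    intro i hi
    rw [getD_ins, getD_cat, if_neg (by omega), if_neg (by omega), if_neg (by omega)]
    congr 1
    omega
  -- lift: τ index i ↦ if i < p then i else i + 2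
  have hlift : ∀ i, (x ++ y).getD i 0
      = (x ++ [n+1,n+1] ++ y).getD (if i < p then i else i + 2) 0 := by
    intro i
    split_ifs with h
    · exact (hproj1 i h).symm
    · exact (hproj2 i (by omega)).symm
  refine ⟨⟨?_, ?_⟩, ?_, ?_⟩
  · intro i
    have h0 := hstir.1 i
    have hcnt : (x ++ [n+1,n+1] ++ y).count i
        = x.count i + ([n+1,n+1] : List ℕ).count i + y.count i := by
      rw [List.count_append, List.count_append]; try omega
    have hm : ([n+1,n+1] : List ℕ).count i = if i = n+1 then 2 else 0 := by
      by_cases h : i = n + 1 <;> simp [h, eq_comm]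
    rw [hcnt, hm] at h0
    rw [List.count_append]
    split_ifs at h0 ⊢ <;> omega
  · intro j k l hjk hkl hl hval
    rw [hLτ] at hl
    rw [hlift j, hlift l] at hval
    rw [hlift j, hlift k]
    exact hstir.2 _ _ _ (by split_ifs <;> omega) (by split_ifs <;> omega)
      (by rw [hLσ]; split_ifs <;> omega) hval
  · intro hc
    rw [contains213_iff] at hc
    obtain ⟨i, j, k, hij, hjk, hk, h1, h2⟩ := hc
    rw [hLτ] at hk
    rw [hlift i, hlift j] at h1
    rw [hlift i, hlift k] at h2
    apply hav1
    rw [contains213_iff]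
    exact ⟨_, _, _, (by split_ifs <;> omega), (by split_ifs <;> omega),
      (by rw [hLσ]; split_ifs <;> omega), h1, h2⟩
  · intro hc
    rw [contains1233_iff] at hc
    obtain ⟨i, j, k, l, hij, hjk, hkl, hl, h1, h2, h3⟩ := hc
    rw [hLτ] at hl
    rw [hlift i, hlift j] at h1
    rw [hlift j, hlift k] at h2
    rw [hlift k, hlift l] at h3
    apply hav2
    rw [contains1233_iff]
    exact ⟨_, _, _, _, (by split_ifs <;> omega), (by split_ifs <;> omega),
      (by split_ifs <;> omega), (by rw [hLσ]; split_ifs <;> omega), h1, h2, h3⟩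

lemma first_split {a : ℕ} {l : List ℕ} (h : a ∈ l) :
    ∃ u v : List ℕ, l = u ++ a :: v ∧ a ∉ u := by
  induction l with
  | nil => simp at h
  | cons b t ih =>
    by_cases hba : b = a
    · exact ⟨[], t, by simp [hba], by simp⟩
    · have ht : a ∈ t := by
        rcases List.mem_cons.mp h with h' | h'
        · exact absurd h'.symm hba
        · exact h'
      obtain ⟨u, v, heq, hu⟩ := ih ht
      exact ⟨b :: u, v, by simp [heq], by simp [hu]; exact fun h' => hba h'.symm⟩

lemma structure_good {n : ℕ} (hn : 1 ≤ n) {σ : List ℕ} (hg : Good (n+1) σ) :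
    ∃ x y : List ℕ, σ = x ++ [n+1, n+1] ++ y ∧ x.length ≤ 2 ∧
      (x.length = 2 → x.getD 0 0 = x.getD 1 0) := by
  obtain ⟨hstir, hav1, hav2⟩ := hg
  have hcnt := hstir.1 (n+1)
  rw [if_pos (by omega)] at hcnt
  have hmem : (n+1) ∈ σ := List.count_pos_iff.mp (by omega)
  obtain ⟨u, v, rfl, hu⟩ := first_split hmem
  have hcv : v.count (n+1) = 1 := by
    rw [List.count_append, List.count_cons] at hcnt
    have : u.count (n+1) = 0 := List.count_eq_zero_of_not_mem hu
    simp at hcnt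
    omega
  have hmem2 : (n+1) ∈ v := List.count_pos_iff.mp (by omega)
  obtain ⟨u', v', rfl, hu'⟩ := first_split hmem2
  -- σ = u ++ (n+1) :: (u' ++ (n+1) :: v')
  have hlen : (u ++ (n+1) :: (u' ++ (n+1) :: v')).length
      = u.length + 1 + u'.length + 1 + v'.length := by simp; omega
  have hself : ∀ i, i < (u ++ (n+1) :: (u' ++ (n+1) :: v')).length →
      (u ++ (n+1) :: (u' ++ (n+1) :: v')).getD i 0 ≤ n + 1 := by
    intro i hi
    exact (stirling_mem_le hstir (getD_mem_of_lt hi)).2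
  have gj : (u ++ (n+1) :: (u' ++ (n+1) :: v')).getD u.length 0 = n + 1 := by
    rw [getD_cat, if_neg (by omega)]
    simp
  have gu : ∀ i, i < u.length →
      (u ++ (n+1) :: (u' ++ (n+1) :: v')).getD i 0 = u.getD i 0 := by
    intro i hi
    rw [getD_cat, if_pos hi]
  have hu'nil : u' = [] := by
    by_contra hne
    have hpos : 0 < u'.length := List.length_pos_iff.mpr hne
    have gk : (u ++ (n+1) :: (u' ++ (n+1) :: v')).getD (u.length + 1) 0 = u'.getD 0 0 := by
      rw [getD_cat, if_neg (by omega)]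
      have : u.length + 1 - u.length = 1 := by omega
      rw [this]
      show (u' ++ (n+1) :: v').getD 0 0 = u'.getD 0 0
      rw [getD_cat, if_pos hpos]
    have gl : (u ++ (n+1) :: (u' ++ (n+1) :: v')).getD (u.length + 1 + u'.length) 0
        = n + 1 := by
      rw [getD_cat, if_neg (by omega)]
      have : u.length + 1 + u'.length - u.length = u'.length + 1 := by omega
      rw [this, List.getD_cons_succ]
      rw [getD_cat, if_neg (by omega)]
      simp
    have := hstir.2 u.length (u.length + 1) (u.length + 1 + u'.length)
      (by omega) (by omega) (by rw [hlen]; omega) (by rw [gj, gl])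
    rw [gj, gk] at this
    have hle := hself (u.length + 1) (by rw [hlen]; omega)
    rw [gk] at hle
    omega
  subst hu'nil
  -- now σ = u ++ (n+1) :: (n+1) :: v', i.e. u ++ [n+1,n+1] ++ v'
  have hconst : ∀ i1 i2 : ℕ, i1 < i2 → i2 < u.length → u.getD i1 0 = u.getD i2 0 := by
    intro i1 i2 h12 h2
    have e1 := gu i1 (by omega)
    have e2 := gu i2 (by omega)
    have m1 : u.getD i1 0 ≤ n + 1 := by
      rw [← e1]; exact hself i1 (by rw [hlen]; simp; omega)
    have hne1 : u.getD i1 0 ≠ n + 1 := fun h => hu (h ▸ getD_mem_of_lt (by omega))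
    have hne2 : u.getD i2 0 ≠ n + 1 := fun h => hu (h ▸ getD_mem_of_lt (by omega))
    have m2 : u.getD i2 0 ≤ n + 1 := by
      rw [← e2]; exact hself i2 (by rw [hlen]; simp; omega)
    rcases Nat.lt_trichotomy (u.getD i1 0) (u.getD i2 0) with h | h | h
    · -- ascent: 1233 with (i1, i2, |u|, |u|+1)
      exfalso
      apply hav2
      rw [contains1233_iff]
      have gj2 : (u ++ (n+1) :: ([] ++ (n+1) :: v')).getD (u.length + 1) 0 = n + 1 := by
        rw [getD_cat, if_neg (by omega)]
        have : u.length + 1 - u.length = 1 := by omega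
        rw [this]
        simp
      exact ⟨i1, i2, u.length, u.length + 1, h12, h2, by omega,
        by rw [hlen]; simp; omega, by rw [e1, e2]; exact h,
        by rw [e2, gj]; omega, by rw [gj, gj2]⟩
    · exact h
    · -- descent: 213 with (i1, i2, |u|)
      exfalso
      apply hav1
      rw [contains213_iff]
      exact ⟨i1, i2, u.length, h12, h2, by rw [hlen]; omega,
        by rw [e1, e2]; exact h, by rw [e1, gj]; omega⟩
  refine ⟨u, v', by simp, ?_, fun h2 => hconst 0 1 (by omega) (by omega)⟩
  -- length ≤ 2
  by_contra hge
  have h3 : 3 ≤ u.length := by omega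
  have hall : ∀ b ∈ u, u.getD 0 0 = b := by
    intro b hb
    obtain ⟨i, hi, rfl⟩ := List.mem_iff_getElem.mp hb
    rw [← List.getD_eq_getElem u 0 hi]
    rcases Nat.eq_zero_or_pos i with h | h
    · rw [h]
    · exact hconst 0 i h hi
  have hcu : u.count (u.getD 0 0) = u.length := List.count_eq_length.mpr hall
  have hc2 := hstir.1 (u.getD 0 0)
  rw [List.count_append] at hc2
  split_ifs at hc2 <;> omega

lemma bounded_lists_finite (n m : ℕ) :
    {l : List ℕ | l.length = m ∧ ∀ x ∈ l, x ≤ n}.Finite := by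
  have h1 : {l : List (Fin (n+1)) | l.length = m}.Finite := List.finite_length_eq _ m
  apply Set.Finite.of_finite_image
    (f := fun l : List ℕ => l.map (fun v => (⟨min v n, by omega⟩ : Fin (n+1))))
  · apply h1.subset
    rintro _ ⟨l, ⟨hl, _⟩, rfl⟩
    simp [hl]
  · intro a ha b hb hab
    have key : ∀ l : List ℕ, (∀ x ∈ l, x ≤ n) →
        (l.map (fun v => (⟨min v n, by omega⟩ : Fin (n+1)))).map Fin.val = l := by
      intro l hl
      rw [List.map_map]
      conv_rhs => rw [← List.map_id l]
      apply List.map_congr_left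
      intro x hx
      simp [Nat.min_eq_left (hl x hx)]
    have h2 := congrArg (List.map Fin.val) hab
    simpa only [key a ha.2, key b hb.2] using h2

lemma good_finite (n : ℕ) : {σ : List ℕ | Good n σ}.Finite := by
  apply (bounded_lists_finite n (2*n)).subset
  intro σ hσ
  exact ⟨stirling_length hσ.1, fun x hx => (stirling_mem_le hσ.1 hx).2⟩

lemma getD_take {l : List ℕ} {p i : ℕ} (h : i < p) :
    (l.take p).getD i 0 = l.getD i 0 := by
  by_cases hi : i < l.length
  · rw [List.getD_eq_getElem _ 0 (by simp; omega), List.getD_eq_getElem _ 0 hi]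
    exact List.getElem_take
  · rw [List.getD_eq_default _ 0 (by simp; omega), List.getD_eq_default _ 0 (by omega)]

def gIns (m p : ℕ) (τ : List ℕ) : List ℕ := τ.take p ++ [m, m] ++ τ.drop p

lemma length_take_eq {τ : List ℕ} {p : ℕ} (hp : p ≤ τ.length) :
    (τ.take p).length = p := by simp; omega

lemma gIns_getD_lt {m p : ℕ} {τ : List ℕ} (hp : p ≤ τ.length) {i : ℕ} (hi : i < p) :
    (gIns m p τ).getD i 0 = τ.getD i 0 := by
  unfold gIns
  rw [getD_ins, if_pos (by rw [length_take_eq hp]; omega), getD_take hi]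

lemma gIns_getD_block {m p : ℕ} {τ : List ℕ} (hp : p ≤ τ.length) {i : ℕ}
    (h1 : p ≤ i) (h2 : i < p + 2) :
    (gIns m p τ).getD i 0 = m := by
  unfold gIns
  rw [getD_ins, if_neg (by rw [length_take_eq hp]; omega),
    if_pos (by rw [length_take_eq hp]; omega)]

lemma gIns_inj {m p : ℕ} {τ₁ τ₂ : List ℕ} (h1 : p ≤ τ₁.length) (h2 : p ≤ τ₂.length)
    (h : gIns m p τ₁ = gIns m p τ₂) : τ₁ = τ₂ := by
  unfold gIns at h
  rw [List.append_assoc, List.append_assoc] at h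
  obtain ⟨ht, hd⟩ := List.append_inj h (by rw [length_take_eq h1, length_take_eq h2])
  have hd' := List.append_cancel_left hd
  calc τ₁ = τ₁.take p ++ τ₁.drop p := (List.take_append_drop p τ₁).symm
    _ = τ₂.take p ++ τ₂.drop p := by rw [ht, hd']
    _ = τ₂ := List.take_append_drop p τ₂

lemma good_entry_le {n : ℕ} {τ : List ℕ} (hg : Good n τ) {i : ℕ} (hi : i < τ.length) :
    τ.getD i 0 ≤ n := (stirling_mem_le hg.1 (getD_mem_of_lt hi)).2

lemma good_length {n : ℕ} {τ : List ℕ} (hg : Good n τ) : τ.length = 2 * n :=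
  stirling_length hg.1

lemma insert_mem_good {n p : ℕ} (hn : 1 ≤ n) (hp : p ≤ 2) {τ : List ℕ} (hg : Good n τ)
    (hplat : p = 2 → τ.getD 0 0 = τ.getD 1 0) : Good (n+1) (gIns (n+1) p τ) := by
  have hlen : τ.length = 2 * n := good_length hg
  have hp' : p ≤ τ.length := by omega
  have h := insert_good hn (x := τ.take p) (y := τ.drop p)
    (by rw [List.take_append_drop]; exact hg)
    (by rw [length_take_eq hp']; omega)
    (by
      intro h2
      rw [length_take_eq hp'] at h2
      subst h2
      rw [getD_take (by omega), getD_take (by omega)]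
      exact hplat rfl)
  exact h

lemma cover_eq {n : ℕ} (hn : 1 ≤ n) :
    {σ : List ℕ | Good (n+1) σ} =
      (gIns (n+1) 0 '' {σ : List ℕ | Good n σ}) ∪
      (gIns (n+1) 1 '' {σ : List ℕ | Good n σ}) ∪
      (gIns (n+1) 2 '' {σ : List ℕ | Good n σ ∧ σ.getD 0 0 = σ.getD 1 0}) := by
  ext σ
  simp only [Set.mem_setOf_eq, Set.mem_union, Set.mem_image]
  constructor
  · intro hσ
    obtain ⟨x, y, rfl, hx2, hxplat⟩ := structure_good hn hσ
    have hτ : Good n (x ++ y) := delete_good hn hσ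
    have htake : (x ++ y).take x.length = x := List.take_left ..
    have hdrop : (x ++ y).drop x.length = y := List.drop_left ..
    have h3 : x.length = 0 ∨ x.length = 1 ∨ x.length = 2 := by omega
    rcases h3 with h | h | h
    · left; left
      refine ⟨x ++ y, hτ, ?_⟩
      unfold gIns
      rw [← h, htake, hdrop]
    · left; right
      refine ⟨x ++ y, hτ, ?_⟩
      unfold gIns
      rw [← h, htake, hdrop]
    · right
      have e0 : (x ++ y).getD 0 0 = x.getD 0 0 := by rw [getD_cat, if_pos (by omega)]
      have e1 : (x ++ y).getD 1 0 = x.getD 1 0 := by rw [getD_cat, if_pos (by omega)]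
      refine ⟨x ++ y, ⟨hτ, by rw [e0, e1]; exact hxplat h⟩, ?_⟩
      unfold gIns
      rw [← h, htake, hdrop]
  · intro hσ
    rcases hσ with (⟨τ, hτ, rfl⟩ | ⟨τ, hτ, rfl⟩) | ⟨τ, hτ, rfl⟩
    · exact insert_mem_good hn (by omega) hτ (by omega)
    · exact insert_mem_good hn (by omega) hτ (by omega)
    · exact insert_mem_good hn (by omega) hτ.1 (fun _ => hτ.2)

lemma plateau_cover_eq {n : ℕ} (hn : 1 ≤ n) :
    {σ : List ℕ | Good (n+1) σ ∧ σ.getD 0 0 = σ.getD 1 0} =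
      (gIns (n+1) 0 '' {σ : List ℕ | Good n σ}) ∪
      (gIns (n+1) 2 '' {σ : List ℕ | Good n σ ∧ σ.getD 0 0 = σ.getD 1 0}) := by
  ext σ
  simp only [Set.mem_setOf_eq, Set.mem_union, Set.mem_image]
  constructor
  · rintro ⟨hσ, hplat⟩
    have := cover_eq hn
    have hσ' : σ ∈ {σ : List ℕ | Good (n+1) σ} := hσ
    rw [this] at hσ'
    simp only [Set.mem_union, Set.mem_image, Set.mem_setOf_eq] at hσ'
    rcases hσ' with (h | ⟨τ, hτ, rfl⟩) | h
    · exact Or.inl h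
    · exfalso
      have hlen : τ.length = 2 * n := good_length hτ
      have e0 : (gIns (n+1) 1 τ).getD 0 0 = τ.getD 0 0 :=
        gIns_getD_lt (by omega) (by omega)
      have e1 : (gIns (n+1) 1 τ).getD 1 0 = n + 1 :=
        gIns_getD_block (by omega) (by omega) (by omega)
      have := good_entry_le hτ (i := 0) (by omega)
      rw [e0, e1] at hplat
      omega
    · exact Or.inr h
  · intro hσ
    rcases hσ with ⟨τ, hτ, rfl⟩ | ⟨τ, hτ, rfl⟩
    · have hlen : τ.length = 2 * n := good_length hτ
      refine ⟨insert_mem_good hn (by omega) hτ (by omega), ?_⟩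
      rw [gIns_getD_block (by omega) (by omega) (by omega),
        gIns_getD_block (by omega) (by omega) (by omega)]
    · have hlen : τ.length = 2 * n := good_length hτ.1
      refine ⟨insert_mem_good hn (by omega) hτ.1 (fun _ => hτ.2), ?_⟩
      rw [gIns_getD_lt (by omega) (by omega), gIns_getD_lt (by omega) (by omega)]
      exact hτ.2

lemma gIns_ne {n p q : ℕ} (hn : 1 ≤ n) (hq : q ≤ 2) (hpq : p < q) {τ τ' : List ℕ}
    (hτ : Good n τ) (hτ' : Good n τ') : gIns (n+1) p τ ≠ gIns (n+1) q τ' := by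
  intro heq
  have l1 : τ.length = 2*n := good_length hτ
  have l2 : τ'.length = 2*n := good_length hτ'
  have v1 : (gIns (n+1) p τ).getD p 0 = n+1 :=
    gIns_getD_block (by omega) le_rfl (by omega)
  have v2 : (gIns (n+1) q τ').getD p 0 = τ'.getD p 0 :=
    gIns_getD_lt (by omega) (by omega)
  have v3 := good_entry_le hτ' (i := p) (by omega)
  rw [heq, v2] at v1
  omega

lemma step_count {n : ℕ} (hn : 1 ≤ n) :
    {σ : List ℕ | Good (n+1) σ}.ncard
      = {σ : List ℕ | Good n σ}.ncard + {σ : List ℕ | Good n σ}.ncard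
        + {σ : List ℕ | Good n σ ∧ σ.getD 0 0 = σ.getD 1 0}.ncard ∧
    {σ : List ℕ | Good (n+1) σ ∧ σ.getD 0 0 = σ.getD 1 0}.ncard
      = {σ : List ℕ | Good n σ}.ncard
        + {σ : List ℕ | Good n σ ∧ σ.getD 0 0 = σ.getD 1 0}.ncard := by
  have hAfin : {σ : List ℕ | Good n σ}.Finite := good_finite n
  have hBfin : {σ : List ℕ | Good n σ ∧ σ.getD 0 0 = σ.getD 1 0}.Finite :=
    hAfin.subset (fun σ h => h.1)
  have hinj : ∀ p : ℕ, p ≤ 2 → Set.InjOn (gIns (n+1) p) {σ : List ℕ | Good n σ} := by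
    intro p hp τ₁ h1 τ₂ h2 heq
    exact gIns_inj (by rw [good_length h1]; omega) (by rw [good_length h2]; omega) heq
  have hinjB : ∀ p : ℕ, p ≤ 2 →
      Set.InjOn (gIns (n+1) p) {σ : List ℕ | Good n σ ∧ σ.getD 0 0 = σ.getD 1 0} := by
    intro p hp
    exact (hinj p hp).mono (fun σ h => h.1)
  have d01 : Disjoint (gIns (n+1) 0 '' {σ : List ℕ | Good n σ})
      (gIns (n+1) 1 '' {σ : List ℕ | Good n σ}) := by
    rw [Set.disjoint_left]
    rintro σ ⟨τ, hτ, rfl⟩ ⟨τ', hτ', heq⟩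
    exact gIns_ne hn (by omega) (by omega) hτ hτ' heq.symm
  have d02 : Disjoint (gIns (n+1) 0 '' {σ : List ℕ | Good n σ})
      (gIns (n+1) 2 '' {σ : List ℕ | Good n σ ∧ σ.getD 0 0 = σ.getD 1 0}) := by
    rw [Set.disjoint_left]
    rintro σ ⟨τ, hτ, rfl⟩ ⟨τ', hτ', heq⟩
    exact gIns_ne hn (by omega) (by omega) hτ hτ'.1 heq.symm
  have d12 : Disjoint (gIns (n+1) 1 '' {σ : List ℕ | Good n σ})
      (gIns (n+1) 2 '' {σ : List ℕ | Good n σ ∧ σ.getD 0 0 = σ.getD 1 0}) := by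
    rw [Set.disjoint_left]
    rintro σ ⟨τ, hτ, rfl⟩ ⟨τ', hτ', heq⟩
    exact gIns_ne hn (by omega) (by omega) hτ hτ'.1 heq.symm
  constructor
  · rw [cover_eq hn]
    rw [Set.ncard_union_eq (by exact Set.disjoint_union_left.mpr ⟨d02, d12⟩)
      ((hAfin.image _).union (hAfin.image _)) (hBfin.image _),
      Set.ncard_union_eq d01 (hAfin.image _) (hAfin.image _),
      Set.ncard_image_of_injOn (hinj 0 (by omega)),
      Set.ncard_image_of_injOn (hinj 1 (by omega)),
      Set.ncard_image_of_injOn (hinjB 2 (by omega))]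
  · rw [plateau_cover_eq hn]
    rw [Set.ncard_union_eq d02 (hAfin.image _) (hBfin.image _),
      Set.ncard_image_of_injOn (hinj 0 (by omega)),
      Set.ncard_image_of_injOn (hinjB 2 (by omega))]

lemma good_one_iff (σ : List ℕ) : Good 1 σ ↔ σ = [1,1] := by
  constructor
  · intro hg
    have hlen : σ.length = 2 := by have := good_length hg; omega
    have hall : ∀ b ∈ σ, b = 1 := by
      intro b hb
      have := stirling_mem_le hg.1 hb
      omega
    have : σ = List.replicate 2 1 := List.eq_replicate_iff.mpr ⟨hlen, hall⟩
    rw [this]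
    rfl
  · rintro rfl
    refine ⟨⟨?_, ?_⟩, ?_, ?_⟩
    · intro i
      have h : ([1,1] : List ℕ).count i = if i = 1 then 2 else 0 := by
        by_cases h : i = 1 <;> simp [h, eq_comm]
      rw [h]
      split_ifs <;> omega
    · intro j k l h1 h2 h3 _
      simp only [List.length_cons, List.length_nil] at h3
      omega
    · intro hc
      rw [contains213_iff] at hc
      obtain ⟨i, j, k, hij, hjk, hk, -⟩ := hc
      simp only [List.length_cons, List.length_nil] at hk
      omega
    · intro hc
      rw [contains1233_iff] at hc
      obtain ⟨i, j, k, l, hij, hjk, hkl, hl, -⟩ := hc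
      simp only [List.length_cons, List.length_nil] at hl
      omega

lemma main_count : ∀ n : ℕ, 1 ≤ n →
    {σ : List ℕ | Good n σ}.ncard = Nat.fib (2*n) ∧
    {σ : List ℕ | Good n σ ∧ σ.getD 0 0 = σ.getD 1 0}.ncard = Nat.fib (2*n - 1) := by
  intro n hn
  induction n, hn using Nat.le_induction with
  | base =>
    have hA : {σ : List ℕ | Good 1 σ} = {[1,1]} := by
      ext σ; simp [good_one_iff]
    have hB : {σ : List ℕ | Good 1 σ ∧ σ.getD 0 0 = σ.getD 1 0} = {[1,1]} := by
      ext σ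
      simp only [Set.mem_setOf_eq, Set.mem_singleton_iff, good_one_iff]
      constructor
      · exact fun h => h.1
      · rintro rfl
        exact ⟨rfl, rfl⟩
    rw [hA, hB, Set.ncard_singleton]
    constructor <;> decide
  | succ n hn ih =>
    obtain ⟨ihA, ihB⟩ := ih
    obtain ⟨e1, e2⟩ := step_count hn
    rw [e1, e2, ihA, ihB]
    have hm : 2*n = (2*n - 1) + 1 := by omega
    set m := 2*n - 1 with hmdef
    have h1 : 2*(n+1) = m + 3 := by omega
    have h2 : 2*(n+1) - 1 = m + 2 := by omega
    have f1 : Nat.fib (m+2) = Nat.fib m + Nat.fib (m+1) := Nat.fib_add_two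
    have f2 : Nat.fib (m+3) = Nat.fib (m+1) + Nat.fib (m+2) := Nat.fib_add_two
    have h3 : Nat.fib (m + 3 - 1) = Nat.fib (m + 2) := by norm_num
    rw [h1, hm]
    omega

/-- Stirling permutations avoiding 213 and 1233 are counted by even-indexed
Fibonacci numbers. -/
theorem stirling_avoid_213_1233_eq_fib (n : ℕ) (hn : 1 ≤ n) :
    {σ : List ℕ | IsStirling n σ ∧ Avoids σ [2, 1, 3] ∧ Avoids σ [1, 2, 3, 3]}.ncard =
      Nat.fib (2 * n) := by
  exact (main_count n hn).1
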